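/- Let k ≥ 2 and n ≥ 4 be integers and let G_{k,n} be the graph described in the context. Then the domination number and the total domination number of G_{k,n} both equal k, i.e. γ(G_{k,n}) = γ_t(G_{k,n}) = k. -/

import Mathlib

/-!
Split the vertices into `k` blocks: the `z_{i,·}` for each `i`, and the `y_j` together with `u`.
Each block contains the closed neighbourhood of one of its vertices (`z_{i,3}`, resp. `y_1`), so
every dominating set meets all `k` blocks and `γ ≥ k`. Conversely `u` together with the `z_{i,1}`
is a total dominating set of size `k`, so `γ_t ≤ k`, and `γ ≤ γ_t` closes the circle.
-/

/-- Vertices of `G_{k,n}`: the clique vertices `y_j` (`Sum.inl`), the vertices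
`z_{i,j}` (`Sum.inr (Sum.inl (i,j))`, 0-indexed), and the vertex
`u = Sum.inr (Sum.inr ())`. -/
abbrev GknV (k n : ℕ) := Fin n ⊕ ((Fin (k - 1) × Fin n) ⊕ Unit)

/-- Edge relation of `G_{k,n}`: the `y`'s form a `K_n`; for each `i` the
`z_{i,·}`'s form a `K_n` minus the edge `z_{i,1} z_{i,2}` (0-indexed: second
coordinates `0` and `1`); `u` is adjacent to every `y_j` and to `z_{i,1}`,
`z_{i,2}` for every `i`. -/
def GknRel (k n : ℕ) : GknV k n → GknV k n → Prop
  | .inl _, .inl _ => True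
  | .inr (.inl p), .inr (.inl q) =>
      p.1 = q.1 ∧ ¬((p.2.val = 0 ∧ q.2.val = 1) ∨ (p.2.val = 1 ∧ q.2.val = 0))
  | .inr (.inr _), .inl _ => True
  | .inr (.inr _), .inr (.inl p) => p.2.val = 0 ∨ p.2.val = 1
  | _, _ => False

/-- The graph `G_{k,n}`. -/
def Gkn (k n : ℕ) : SimpleGraph (GknV k n) := SimpleGraph.fromRel (GknRel k n)

/-- `D` is a dominating set of `G`. -/
def IsDomSet {V : Type*} (G : SimpleGraph V) (D : Finset V) : Prop :=
  ∀ v : V, v ∉ D → ∃ d ∈ D, G.Adj v d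

/-- `D` is a total dominating set of `G`. -/
def IsTotalDomSet {V : Type*} (G : SimpleGraph V) (D : Finset V) : Prop :=
  ∀ v : V, ∃ d ∈ D, G.Adj v d

theorem IsTotalDomSet.isDomSet {V : Type*} {G : SimpleGraph V} {D : Finset V}
    (hD : IsTotalDomSet G D) : IsDomSet G D :=
  fun v _ => hD v

/-- A dominating set meets every fibre of `f`, since it contains `w b` or a neighbour of it. -/
theorem IsDomSet.card_le_of_closedNeighborSet_subset_fiber {V β : Type*} [Fintype β]
    {G : SimpleGraph V} {D : Finset V} (hD : IsDomSet G D) (f : V → β) (w : β → V)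
    (hw : ∀ b, f (w b) = b) (hadj : ∀ b v, G.Adj (w b) v → f v = b) :
    Fintype.card β ≤ D.card := by
  have hsurj : Set.SurjOn f D Set.univ := by
    intro b _
    by_cases hb : w b ∈ D
    · exact ⟨w b, hb, hw b⟩
    · obtain ⟨d, hd, h⟩ := hD (w b) hb
      exact ⟨d, hd, hadj b d h⟩
  rw [← Finset.card_univ]
  exact Finset.card_le_card_of_surjOn f (by simpa using hsurj)

theorem sInf_card_eq_of_exists_of_forall_le {α : Type*} {P : Finset α → Prop} {k : ℕ}
    (hex : ∃ D, P D ∧ D.card = k) (hle : ∀ D, P D → k ≤ D.card) :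
    sInf {m : ℕ | ∃ D, P D ∧ D.card = m} = k :=
  IsLeast.csInf_eq ⟨hex, by rintro _ ⟨D, hD, rfl⟩; exact hle D hD⟩

namespace Gkn

variable {k n : ℕ}

theorem adj_iff {a b : GknV k n} :
    (Gkn k n).Adj a b ↔ a ≠ b ∧ (GknRel k n a b ∨ GknRel k n b a) :=
  SimpleGraph.fromRel_adj _ _ _

/-- The `z_{i,·}` form block `some i`; the `y_j` together with `u` form block `none`. -/
def block : GknV k n → Option (Fin (k - 1))
  | .inr (.inl p) => some p.1
  | _ => none

def blockWitness (hn : 3 ≤ n) : Option (Fin (k - 1)) → GknV k n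
  | none => .inl ⟨0, by omega⟩
  | some i => .inr (.inl (i, ⟨2, hn⟩))

theorem block_eq_of_adj_blockWitness (hn : 3 ≤ n) (b : Option (Fin (k - 1))) (v : GknV k n)
    (h : (Gkn k n).Adj (blockWitness hn b) v) : block v = b := by
  rw [adj_iff] at h
  rcases b with _ | i <;> rcases v with j | q | ⟨⟩ <;>
    simp_all [blockWitness, block, GknRel, eq_comm]

theorem card_le_of_isDomSet (hk : 1 ≤ k) (hn : 3 ≤ n) {D : Finset (GknV k n)}
    (hD : IsDomSet (Gkn k n) D) : k ≤ D.card := by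
  have := hD.card_le_of_closedNeighborSet_subset_fiber block (blockWitness hn)
    (by rintro (_ | _) <;> rfl) (block_eq_of_adj_blockWitness hn)
  simpa [Nat.sub_add_cancel hk] using this

/-- `u` together with one vertex `z_{i,1}` from each block. -/
def hubSet (hn : 0 < n) : Finset (GknV k n) :=
  insert (.inr (.inr ())) (Finset.univ.image fun i => .inr (.inl (i, ⟨0, hn⟩)))

theorem card_hubSet (hk : 1 ≤ k) (hn : 0 < n) : (hubSet hn : Finset (GknV k n)).card = k := by
  rw [hubSet, Finset.card_insert_of_notMem (by simp),
    Finset.card_image_of_injective _ (fun a b hab => by simpa using hab), Finset.card_univ,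
    Fintype.card_fin]
  omega

theorem isTotalDomSet_hubSet (hk : 2 ≤ k) (hn : 0 < n) :
    IsTotalDomSet (Gkn k n) (hubSet hn) := by
  rintro (j | ⟨i, j⟩ | ⟨⟩)
  · exact ⟨.inr (.inr ()), by simp [hubSet], by simp [adj_iff, GknRel]⟩
  · by_cases hj : j.val = 0 ∨ j.val = 1
    · exact ⟨.inr (.inr ()), by simp [hubSet], by simp [adj_iff, GknRel, hj]⟩
    · refine ⟨.inr (.inl (i, ⟨0, hn⟩)), by simp [hubSet], ?_⟩
      simpa [adj_iff, GknRel, Fin.ext_iff, not_or] using hj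
  · exact ⟨.inr (.inl (⟨0, by omega⟩, ⟨0, hn⟩)), by simp [hubSet], by simp [adj_iff, GknRel]⟩

end Gkn

/-- The domination number and total domination number of `G_{k,n}` both
equal `k`. -/
theorem stmt3 (k n : ℕ) (hk : 2 ≤ k) (hn : 4 ≤ n) :
    sInf {m : ℕ | ∃ D : Finset (GknV k n), IsDomSet (Gkn k n) D ∧ D.card = m} = k ∧
    sInf {m : ℕ | ∃ D : Finset (GknV k n), IsTotalDomSet (Gkn k n) D ∧ D.card = m} = k := by
  have hn0 : 0 < n := by omega
  have hD : IsTotalDomSet (Gkn k n) (Gkn.hubSet hn0) := Gkn.isTotalDomSet_hubSet hk hn0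
  have hcard : (Gkn.hubSet hn0 : Finset (GknV k n)).card = k := Gkn.card_hubSet (by omega) hn0
  exact ⟨sInf_card_eq_of_exists_of_forall_le ⟨_, hD.isDomSet, hcard⟩
      fun D hD => Gkn.card_le_of_isDomSet (by omega) (by omega) hD,
    sInf_card_eq_of_exists_of_forall_le ⟨_, hD, hcard⟩
      fun D hD => Gkn.card_le_of_isDomSet (by omega) (by omega) hD.isDomSet⟩
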